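/- Let gl_n(K) be the matrix Lie algebra over a field K of characteristic zero. For every even k ≥ 2, the alternating k-cochain φ_k(A_1 ∧ ⋯ ∧ A_k) = Σ_{s ∈ S_k} sgn(s) tr(A_{s(1)} ⋯ A_{s(k)}) is identically zero; for every odd k, φ_k is a Chevalley–Eilenberg k-cocycle on gl_n(K) with trivial coefficients K. -/

import Mathlib

/-!
STATEMENT 15: Let `gl_n(K)` be the matrix Lie algebra over a field `K` of
characteristic zero. For every even `k ≥ 2`, the alternating `k`-cochain
`φ_k(A_1 ∧ ⋯ ∧ A_k) = Σ_{s ∈ S_k} sgn(s) tr(A_{s(1)} ⋯ A_{s(k)})`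
is identically zero; for every odd `k`, `φ_k` is a Chevalley–Eilenberg
`k`-cocycle on `gl_n(K)` with trivial coefficients `K`, i.e.
`Σ_{i<j} (−1)^{i+j} φ_k([x_i,x_j], x_0, …, x̌_i, …, x̌_j, …, x_k) = 0`.
-/

/-- The standard primitive cochain
`φ_k(A_1, …, A_k) = Σ_{s ∈ S_k} sgn(s) · tr(A_{s(1)} ⋯ A_{s(k)})`. -/
noncomputable def phiCochain {K : Type*} [Field K] (n k : ℕ)
    (x : Fin k → Matrix (Fin n) (Fin n) K) : K :=
  ∑ s : Equiv.Perm (Fin k),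
    ((Equiv.Perm.sign s : ℤ) : K) * ((List.ofFn fun i => x (s i)).prod).trace

/-!
`φ_k` is the alternatization of the multilinear map `tr(A_1 ⋯ A_k)`.

Cyclicity of the trace makes that map invariant under rotating its arguments, and for even `k`
the rotation is an odd permutation, so `φ_k = -φ_k`.

Since `ad y` acts on products by the Leibniz rule and `tr ⁅y, A⁆ = 0`, the map, hence `φ_k`, is
ad-invariant. For an ad-invariant alternating cochain, sum the terms of `dφ` over *ordered* pairs
`(i, j)`: grouping by the first index `i`, each group is `±` an invariance sum for `ad (x i)`
applied to the remaining arguments, so it vanishes, while the full ordered sum is `-2 dφ`.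
-/

open Function Equiv

theorem Fin.val_succAbove {n : ℕ} (i : Fin (n + 1)) (p : Fin n) :
    (i.succAbove p : ℕ) = if (p : ℕ) < i then (p : ℕ) else (p : ℕ) + 1 := by
  simp only [Fin.succAbove, Fin.lt_def, Fin.val_castSucc, apply_ite Fin.val, Fin.val_succ]

namespace MultilinearMap

variable {R M N : Type*} [CommRing R] [AddCommGroup M] [Module R M] [AddCommGroup N] [Module R N]

theorem alternatization_domDomCongr {ι : Type*} [Fintype ι] [DecidableEq ι]
    (m : MultilinearMap R (fun _ : ι => M) N) (σ : Perm ι) :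
    alternatization (m.domDomCongr σ) = Perm.sign σ • alternatization m := by
  ext v
  simp only [alternatization_apply, domDomCongr_apply, AlternatingMap.smul_apply, Finset.smul_sum]
  refine Fintype.sum_equiv (Equiv.mulRight σ) _ _ fun τ => ?_
  simp only [Equiv.coe_mulRight, Perm.coe_mul, comp_apply, smul_smul, Perm.sign_mul]
  rw [mul_comm (Perm.sign τ), ← mul_assoc, Int.units_mul_self, one_mul]

theorem alternatization_eq_zero_of_domDomCongr_finRotate [IsAddTorsionFree N] {k : ℕ}
    (hk : Even k) (hk₀ : k ≠ 0) (m : MultilinearMap R (fun _ : Fin k => M) N)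
    (hm : m.domDomCongr (finRotate k) = m) : alternatization m = 0 := by
  have hsign : Perm.sign (finRotate k) = -1 := by
    obtain ⟨j, rfl⟩ := Nat.exists_eq_succ_of_ne_zero hk₀
    rw [sign_finRotate, Nat.succ_sub_one,
      (Nat.not_even_iff_odd.mp (Nat.even_add_one.mp hk)).neg_one_pow]
  ext v
  have h := congrArg (· v) (alternatization_domDomCongr m (finRotate k))
  simp only [hm, hsign, Units.neg_smul, one_smul, AlternatingMap.neg_apply] at h
  rw [eq_neg_iff_add_eq_zero, ← two_nsmul, two_nsmul_eq_zero] at h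
  exact h

end MultilinearMap

section Invariance

variable {ι L : Type*} [Fintype ι] [DecidableEq ι] [Bracket L L]

def IsAdInvariant {N : Type*} [AddCommMonoid N] (f : (ι → L) → N) : Prop :=
  ∀ (y : L) (v : ι → L), ∑ i, f (update v i ⁅y, v i⁆) = 0

theorem MultilinearMap.isAdInvariant_alternatization {R N : Type*} [CommRing R] [AddCommGroup L]
    [Module R L] [AddCommGroup N] [Module R N] {m : MultilinearMap R (fun _ : ι => L) N}
    (hm : IsAdInvariant m) : IsAdInvariant (alternatization m) := by
  intro y v
  simp only [alternatization_apply, domDomCongr_apply]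
  rw [Finset.sum_comm]
  refine Finset.sum_eq_zero fun σ _ => ?_
  rw [← Finset.smul_sum, ← Equiv.sum_comp σ]
  simp only [update_apply_equiv_apply, symm_apply_apply]
  exact (congrArg _ (hm y (v ∘ σ))).trans (smul_zero _)

end Invariance

section CeArgs

variable {L : Type*} [Bracket L L] {k : ℕ}

/-- The arguments `⁅x i, x j⁆, x 0, …, x̌ i, …, x̌ j, …, x k` of the `(i, j)` term of the
Chevalley–Eilenberg differential, for `i < j`. -/
def ceArgs (x : Fin (k + 1) → L) (i j : Fin (k + 1)) : Fin k → L := fun m =>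
  if (m : ℕ) = 0 then ⁅x i, x j⁆
  else
    x ⟨if (m : ℕ) - 1 < (i : ℕ) then (m : ℕ) - 1
       else if (m : ℕ) < (j : ℕ) then (m : ℕ) else (m : ℕ) + 1,
      by split_ifs <;> omega⟩

theorem ceArgs_eq_cons_removeNth (x : Fin (k + 2) → L) {i a b : Fin (k + 2)} {m : Fin (k + 1)}
    (hab : a < b) (h : a = i ∧ b = i.succAbove m ∨ a = i.succAbove m ∧ b = i) :
    ceArgs x a b = Fin.cons ⁅x a, x b⁆ (m.removeNth (i.removeNth x)) := by
  funext p
  cases p using Fin.cases with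
  | zero => rfl
  | succ p =>
    simp only [ceArgs, Fin.val_succ, Fin.cons_succ, Fin.removeNth, if_neg p.val.succ_ne_zero]
    congr 1
    ext
    rw [Fin.lt_def] at hab
    rcases h with ⟨rfl, rfl⟩ | ⟨rfl, rfl⟩ <;>
    · simp only [Fin.val_succAbove, Nat.add_sub_cancel] at hab ⊢
      split_ifs at hab ⊢ <;> omega

end CeArgs

namespace AlternatingMap

theorem map_cons_neg {R M N : Type*} [CommRing R] [AddCommGroup M] [Module R M] [AddCommGroup N]
    [Module R N] {k : ℕ} (f : M [⋀^Fin (k + 1)]→ₗ[R] N) (c : M) (v : Fin k → M) :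
    f (Fin.cons (-c) v) = -f (Fin.cons c v) := by
  rw [← Fin.update_cons_zero c, map_update_neg, Fin.update_cons_zero]

variable {R L N : Type*} [CommRing R] [LieRing L] [Module R L] [AddCommGroup N] [Module R N]
  {k : ℕ}

theorem sum_neg_one_pow_smul_map_cons_lie_removeNth {f : L [⋀^Fin (k + 1)]→ₗ[R] N}
    (hf : IsAdInvariant f) (y : L) (v : Fin (k + 1) → L) :
    ∑ m : Fin (k + 1), (-1 : ℤ) ^ (m : ℕ) • f (Fin.cons ⁅y, v m⁆ (m.removeNth v)) = 0 := by
  simp only [← Matrix.vecCons.eq_def, ← map_insertNth, Fin.insertNth_removeNth]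
  exact hf y v

theorem sum_ceArgs_eq_zero_of_isAdInvariant [IsAddTorsionFree N] {f : L [⋀^Fin (k + 1)]→ₗ[R] N}
    (hf : IsAdInvariant f) (x : Fin (k + 2) → L) :
    ∑ i : Fin (k + 2), ∑ j : Fin (k + 2),
      (if (i : ℕ) < j then (-1 : ℤ) ^ ((i : ℕ) + j) • f (ceArgs x i j) else 0) = 0 := by
  set G : Fin (k + 2) → Fin (k + 2) → N := fun i j =>
    if (i : ℕ) < j then (-1 : ℤ) ^ ((i : ℕ) + j) • f (ceArgs x i j) else 0 with hG
  have hpair (i : Fin (k + 2)) (m : Fin (k + 1)) :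
      G i (i.succAbove m) + G (i.succAbove m) i = -((-1 : ℤ) ^ ((i : ℕ) + m) •
        f (Fin.cons ⁅x i, x (i.succAbove m)⁆ (m.removeNth (i.removeNth x)))) := by
    rcases Fin.lt_or_lt_of_ne (Fin.succAbove_ne i m).symm with h | h
    · have hj : (i.succAbove m : ℕ) = m + 1 := by
        rw [Fin.succAbove_of_le_castSucc _ _ ((Fin.lt_succAbove_iff_le_castSucc _ _).mp h),
          Fin.val_succ]
      simp only [hG]
      rw [if_pos (Fin.lt_def.mp h), if_neg (Nat.lt_asymm (Fin.lt_def.mp h)),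
        ceArgs_eq_cons_removeNth x h (.inl ⟨rfl, rfl⟩), hj, ← add_assoc, pow_succ, mul_neg_one,
        neg_smul, add_zero]
    · have hj : (i.succAbove m : ℕ) = m := by
        rw [Fin.succAbove_of_castSucc_lt _ _ ((Fin.succAbove_lt_iff_castSucc_lt _ _).mp h),
          Fin.val_castSucc]
      simp only [hG]
      rw [if_neg (Nat.lt_asymm (Fin.lt_def.mp h)), if_pos (Fin.lt_def.mp h),
        ceArgs_eq_cons_removeNth x h (.inr ⟨rfl, rfl⟩), hj, ← lie_skew, f.map_cons_neg, smul_neg,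
        add_comm (m : ℕ), zero_add]
  have hsymm : ∑ i, ∑ j, (G i j + G j i) = 0 := by
    refine Finset.sum_eq_zero fun i _ => ?_
    have hii : G i i = 0 := by simp [hG]
    rw [Fin.sum_univ_succAbove _ i, hii, add_zero, zero_add]
    simp only [hpair, Finset.sum_neg_distrib, neg_eq_zero, pow_add, mul_smul, ← Finset.smul_sum]
    exact (congrArg _
      (f.sum_neg_one_pow_smul_map_cons_lie_removeNth hf (x i) (i.removeNth x))).trans (smul_zero _)
  simp only [Finset.sum_add_distrib] at hsymm
  rwa [Finset.sum_comm (f := fun i j => G j i), ← two_nsmul, two_nsmul_eq_zero] at hsymm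

end AlternatingMap

theorem sum_prod_ofFn_update_lie {A : Type*} [Ring A] {k : ℕ} (y : A) (v : Fin k → A) :
    ∑ i, (List.ofFn (update v i ⁅y, v i⁆)).prod = ⁅y, (List.ofFn v).prod⁆ := by
  induction k with
  | zero => simp [Ring.lie_def]
  | succ k ih =>
    obtain ⟨a, w, rfl⟩ : ∃ a w, v = Fin.cons a w := ⟨v 0, Fin.tail v, (Fin.cons_self_tail v).symm⟩
    have hsucc (j : Fin k) :
        (List.ofFn (update (Fin.cons a w : Fin (k + 1) → A) j.succ ⁅y, w j⁆)).prod
          = a * (List.ofFn (update w j ⁅y, w j⁆)).prod := by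
      rw [← Fin.cons_update, List.ofFn_cons, List.prod_cons]
    rw [Fin.sum_univ_succ]
    simp only [Fin.cons_zero, Fin.cons_succ, hsucc, ← Finset.mul_sum, ih]
    simp only [Fin.update_cons_zero, List.ofFn_cons, List.prod_cons, Ring.lie_def]
    noncomm_ring

section TraceProd

variable (R ι : Type*) [CommRing R] [Fintype ι] [DecidableEq ι] (k : ℕ)

noncomputable def traceProdMultilinear : MultilinearMap R (fun _ : Fin k => Matrix ι ι R) R :=
  (Matrix.traceLinearMap ι R R).compMultilinearMap (MultilinearMap.mkPiAlgebraFin R k _)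

variable {R ι k}

@[simp]
theorem traceProdMultilinear_apply (v : Fin k → Matrix ι ι R) :
    traceProdMultilinear R ι k v = (List.ofFn v).prod.trace := by
  simp [traceProdMultilinear]

theorem traceProdMultilinear_domDomCongr_finRotate :
    (traceProdMultilinear R ι k).domDomCongr (finRotate k) = traceProdMultilinear R ι k := by
  refine MultilinearMap.ext fun v => ?_
  cases k with
  | zero => rfl
  | succ k =>
    simp only [MultilinearMap.domDomCongr_apply, traceProdMultilinear_apply]
    rw [List.ofFn_succ', List.ofFn_succ, List.prod_concat, List.prod_cons, Matrix.trace_mul_comm]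
    simp [Fin.coeSucc_eq_succ]

theorem traceProdMultilinear_isAdInvariant : IsAdInvariant (traceProdMultilinear R ι k) := by
  intro y v
  simp only [traceProdMultilinear_apply]
  rw [← Matrix.trace_sum, sum_prod_ofFn_update_lie, Ring.lie_def, Matrix.trace_sub,
    Matrix.trace_mul_comm, sub_self]

end TraceProd

theorem phiCochain_eq_alternatization {K : Type*} [Field K] (n k : ℕ) :
    phiCochain (K := K) n k =
      MultilinearMap.alternatization (traceProdMultilinear K (Fin n) k) := by
  ext x
  simp [phiCochain, MultilinearMap.alternatization_apply, Units.smul_def]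

theorem phi_even_vanishes_and_odd_is_cocycle
    (K : Type*) [Field K] [CharZero K] (n k : ℕ) :
    (Even k → 2 ≤ k → ∀ x : Fin k → Matrix (Fin n) (Fin n) K, phiCochain n k x = 0)
    ∧ (Odd k → ∀ x : Fin (k + 1) → Matrix (Fin n) (Fin n) K,
        (∑ i : Fin (k + 1), ∑ j : Fin (k + 1),
          if (i : ℕ) < (j : ℕ) then
            ((-1 : ℤ) ^ ((i : ℕ) + (j : ℕ))) •
              phiCochain n k (fun m : Fin k =>
                if (m : ℕ) = 0 then x i * x j - x j * x i
                else
                  x ⟨if (m : ℕ) - 1 < (i : ℕ) then (m : ℕ) - 1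
                     else if (m : ℕ) < (j : ℕ) then (m : ℕ) else (m : ℕ) + 1,
                    by have hm := m.isLt; split_ifs <;> omega⟩)
          else 0) = 0) := by
  rw [phiCochain_eq_alternatization]
  refine ⟨fun hk hk₂ x => ?_, fun _ x => ?_⟩
  · rw [MultilinearMap.alternatization_eq_zero_of_domDomCongr_finRotate hk (by omega) _
      traceProdMultilinear_domDomCongr_finRotate, AlternatingMap.zero_apply]
  · cases k with
    | zero => simp
    | succ k =>
      let : LieRing (Matrix (Fin n) (Fin n) K) := LieRing.ofAssociativeRing
      exact AlternatingMap.sum_ceArgs_eq_zero_of_isAdInvariant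
        (MultilinearMap.isAdInvariant_alternatization traceProdMultilinear_isAdInvariant) x
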